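/- arXiv:2311.01644 — 4 statements merged into one kernel-verified Lean document; each statement's English description precedes it below -/
import Mathlib

section
/- Define L*(m) = (2/π)·(m·arcsin(1/2) − m²·arcsin(1/(2m))) for positive integers m, so that L*(1) = 0. Let k > n ≥ 1 be integers. Then for all integers ℓ₁, …, ℓ_n ≥ 1 with ℓ₁ + … + ℓ_n ≤ k, the copy-average loss Σ_{i=1}^n L*(ℓ_i) + (1/3)·(k − Σ_{i=1}^n ℓ_i) is at least L*(k − n + 1), with equality if and only if Σ_{i=1}^n ℓ_i = k and all but one of the ℓ_i equal 1 (so the remaining one equals k − n + 1). -/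
/-!
Write `ℓᵢ = jᵢ + 1`, `k = n + d` and `φ j = j/3 − L*(j + 1)`. Then the copy-average loss is
`d/3 − Σ φ jᵢ` and `L*(k − n + 1) = d/3 − φ d`. Since `arcsin (1/2) = π/6`, with
`g x = x² arcsin (1/(2x))` one has `L*(m) = m/3 − (2/π) g m`, so `φ j = (2/π) (g (j + 1) − g 1)`.
The Taylor bounds `u + u³/6 ≤ arcsin u ≤ u + u³/6 + u⁵/10` on `[0, 1/2]` pin `g x` to
`x/2 + 1/(48x)` up to `1/(320x³)`, which is precise enough to show that `φ` is strictly
increasing and strictly superadditive: `g x + g y < g (x + y − 1) + g 1` for `x, y ≥ 2`.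
Hence `Σ φ jᵢ ≤ φ (Σ jᵢ) ≤ φ d`, with equality exactly when `Σ jᵢ = d` and at most one
`jᵢ` is nonzero.
-/

open Real

/-- Optimal one-neuron erf approximation error of a unit-orthonormal teacher with
`m` neurons: `L*(m) = (2/π)(m·arcsin(1/2) − m²·arcsin(1/(2m)))`. -/
noncomputable def Lstar (m : ℕ) : ℝ :=
  (2 / π) * ((m : ℝ) * Real.arcsin (1 / 2) - (m : ℝ) ^ 2 * Real.arcsin (1 / (2 * (m : ℝ))))

open Set

theorem one_add_sq_div_two_le_one_div_sqrt_one_sub_sq {x : ℝ} (hx : x ^ 2 < 1) :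
    1 + x ^ 2 / 2 ≤ 1 / √(1 - x ^ 2) := by
  have hy : 0 < 1 - x ^ 2 := by linarith
  rw [one_div, ← Real.sqrt_inv, Real.le_sqrt (by positivity) (inv_nonneg.2 hy.le),
    le_inv_comm₀ (by positivity) hy, inv_eq_one_div, le_div_iff₀ (by positivity)]
  nlinarith [sq_nonneg x, pow_nonneg (sq_nonneg x) 3]

theorem one_div_sqrt_one_sub_sq_le {x : ℝ} (hx : x ^ 2 ≤ 1 / 4) :
    1 / √(1 - x ^ 2) ≤ 1 + x ^ 2 / 2 + x ^ 4 / 2 := by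
  have hy : 0 < 1 - x ^ 2 := by linarith
  rw [one_div, ← Real.sqrt_inv, Real.sqrt_le_left (by positivity), inv_le_comm₀ hy (by positivity),
    inv_eq_one_div, div_le_iff₀ (by positivity)]
  nlinarith [sq_nonneg x, pow_nonneg (sq_nonneg x) 3, mul_nonneg (sq_nonneg x) (sq_nonneg x)]

theorem hasDerivAt_arcsin_of_sq_lt {x : ℝ} (hx : x ^ 2 < 1) :
    HasDerivAt arcsin (1 / √(1 - x ^ 2)) x := by
  refine Real.hasDerivAt_arcsin ?_ ?_ <;> rintro rfl <;> norm_num at hx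

theorem cubic_le_arcsin {u : ℝ} (hu : u ∈ Icc (0 : ℝ) (1 / 2)) : u + u ^ 3 / 6 ≤ arcsin u := by
  refine image_le_of_deriv_right_le_deriv_boundary (f := fun x => x + x ^ 3 / 6)
    (f' := fun x => 1 + x ^ 2 / 2) (by fun_prop) (fun x _ => ?_) (by simp)
    continuous_arcsin.continuousOn
    (fun x hx => (hasDerivAt_arcsin_of_sq_lt ?_).hasDerivWithinAt) (fun x hx => ?_) hu
  · exact (((hasDerivAt_id' x).add ((hasDerivAt_pow 3 x).div_const 6)).congr_deriv
      (by norm_num; ring)).hasDerivWithinAt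
  · nlinarith [hx.1, hx.2]
  · exact one_add_sq_div_two_le_one_div_sqrt_one_sub_sq (by nlinarith [hx.1, hx.2])

theorem arcsin_le_quintic {u : ℝ} (hu : u ∈ Icc (0 : ℝ) (1 / 2)) :
    arcsin u ≤ u + u ^ 3 / 6 + u ^ 5 / 10 := by
  refine image_le_of_deriv_right_le_deriv_boundary continuous_arcsin.continuousOn
    (fun x hx => (hasDerivAt_arcsin_of_sq_lt ?_).hasDerivWithinAt) (by simp)
    (B := fun x => x + x ^ 3 / 6 + x ^ 5 / 10) (B' := fun x => 1 + x ^ 2 / 2 + x ^ 4 / 2)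
    (by fun_prop) (fun x _ => ?_) (fun x hx => ?_) hu
  · nlinarith [hx.1, hx.2]
  · exact ((((hasDerivAt_id' x).add ((hasDerivAt_pow 3 x).div_const 6)).add
      ((hasDerivAt_pow 5 x).div_const 10)).congr_deriv (by norm_num; ring)).hasDerivWithinAt
  · exact one_div_sqrt_one_sub_sq_le (by nlinarith [hx.1, hx.2])

section Superadditive

variable {ι : Type*} {φ : ℕ → ℝ}

theorem apply_add_apply_le_apply_add (h0 : φ 0 = 0)
    (hφ : ∀ a b, 0 < a → 0 < b → φ a + φ b < φ (a + b)) (a b : ℕ) :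
    φ a + φ b ≤ φ (a + b) := by
  rcases Nat.eq_zero_or_pos a with rfl | ha
  · simp [h0]
  rcases Nat.eq_zero_or_pos b with rfl | hb
  · simp [h0]
  exact (hφ a b ha hb).le

theorem sum_apply_le_apply_sum (h0 : φ 0 = 0) (hφ : ∀ a b, φ a + φ b ≤ φ (a + b))
    (s : Finset ι) (j : ι → ℕ) : ∑ i ∈ s, φ (j i) ≤ φ (∑ i ∈ s, j i) := by
  have := Finset.le_sum_of_subadditive (fun n => -φ n) (by simp [h0])
    (fun a b => by linarith [hφ a b]) s j
  simp only [Finset.sum_neg_distrib] at this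
  linarith

theorem sum_apply_lt_apply_sum [DecidableEq ι] (h0 : φ 0 = 0)
    (hφ : ∀ a b, 0 < a → 0 < b → φ a + φ b < φ (a + b)) {s : Finset ι} {j : ι → ℕ}
    {a b : ι} (ha : a ∈ s) (hb : b ∈ s) (hab : a ≠ b) (hja : 0 < j a) (hjb : 0 < j b) :
    ∑ i ∈ s, φ (j i) < φ (∑ i ∈ s, j i) := by
  have hb' : b ∈ s.erase a := Finset.mem_erase.2 ⟨hab.symm, hb⟩
  have hsuper := apply_add_apply_le_apply_add h0 hφ
  rw [← Finset.add_sum_erase s _ ha, ← Finset.add_sum_erase _ _ hb',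
    ← Finset.add_sum_erase s _ ha, ← Finset.add_sum_erase _ _ hb', ← add_assoc, ← add_assoc]
  calc φ (j a) + φ (j b) + ∑ i ∈ (s.erase a).erase b, φ (j i)
      ≤ φ (j a) + φ (j b) + φ (∑ i ∈ (s.erase a).erase b, j i) := by
        gcongr; exact sum_apply_le_apply_sum h0 hsuper _ _
    _ < φ (j a + j b) + φ (∑ i ∈ (s.erase a).erase b, j i) := by
        gcongr; exact hφ _ _ hja hjb
    _ ≤ φ (j a + j b + ∑ i ∈ (s.erase a).erase b, j i) := hsuper _ _

theorem sum_apply_eq_apply_sum_iff [Fintype ι] [Nonempty ι] (h0 : φ 0 = 0)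
    (hφ : ∀ a b, 0 < a → 0 < b → φ a + φ b < φ (a + b)) (j : ι → ℕ) :
    ∑ i, φ (j i) = φ (∑ i, j i) ↔ ∃ i₀, ∀ i ≠ i₀, j i = 0 := by
  classical
  constructor
  · intro heq
    by_contra! h
    obtain ⟨a, -, ha⟩ := h (Classical.arbitrary ι)
    obtain ⟨b, hba, hb⟩ := h a
    exact (sum_apply_lt_apply_sum h0 hφ (Finset.mem_univ a) (Finset.mem_univ b) hba.symm
      (Nat.pos_of_ne_zero ha) (Nat.pos_of_ne_zero hb)).ne heq
  · rintro ⟨i₀, hi₀⟩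
    rw [Fintype.sum_eq_single i₀ fun i hi => by simp [hi₀ i hi, h0],
      Fintype.sum_eq_single i₀ hi₀]

theorem sum_apply_le_of_sum_le [Fintype ι] [Nonempty ι] (h0 : φ 0 = 0)
    (hφ : ∀ a b, 0 < a → 0 < b → φ a + φ b < φ (a + b)) (hmono : StrictMono φ)
    {j : ι → ℕ} {d : ℕ} (hj : ∑ i, j i ≤ d) :
    ∑ i, φ (j i) ≤ φ d ∧ (∑ i, φ (j i) = φ d ↔ ∑ i, j i = d ∧ ∃ i₀, ∀ i ≠ i₀, j i = 0) := by
  have hsum := sum_apply_le_apply_sum h0 (apply_add_apply_le_apply_add h0 hφ) Finset.univ j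
  have hd := hmono.monotone hj
  refine ⟨hsum.trans hd, ⟨fun heq => ?_, fun ⟨hjd, hconc⟩ => ?_⟩⟩
  · have hjd : φ (∑ i, j i) = φ d := le_antisymm hd (heq ▸ hsum)
    exact ⟨hmono.injective hjd, (sum_apply_eq_apply_sum_iff h0 hφ j).1 (by linarith)⟩
  · rw [(sum_apply_eq_apply_sum_iff h0 hφ j).2 hconc, hjd]

end Superadditive

theorem arcsin_one_half : arcsin (1 / 2) = π / 6 := by
  rw [← sin_pi_div_six, arcsin_sin] <;> linarith [pi_pos]

noncomputable def scaledArcsin (x : ℝ) : ℝ := x ^ 2 * arcsin (1 / (2 * x))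

theorem scaledArcsin_bounds {x : ℝ} (hx : 1 ≤ x) :
    x / 2 + x⁻¹ / 48 ≤ scaledArcsin x ∧
      scaledArcsin x ≤ x / 2 + x⁻¹ / 48 + (x ^ 3)⁻¹ / 320 := by
  have hu : 1 / (2 * x) ∈ Icc (0 : ℝ) (1 / 2) :=
    ⟨by positivity, by rw [div_le_div_iff₀ (by positivity) two_pos]; linarith⟩
  have hx0 : x ≠ 0 := by positivity
  constructor
  · calc x / 2 + x⁻¹ / 48 = x ^ 2 * (1 / (2 * x) + (1 / (2 * x)) ^ 3 / 6) := by
          field_simp; ring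
      _ ≤ scaledArcsin x := mul_le_mul_of_nonneg_left (cubic_le_arcsin hu) (sq_nonneg x)
  · calc scaledArcsin x
        ≤ x ^ 2 * (1 / (2 * x) + (1 / (2 * x)) ^ 3 / 6 + (1 / (2 * x)) ^ 5 / 10) :=
          mul_le_mul_of_nonneg_left (arcsin_le_quintic hu) (sq_nonneg x)
      _ = x / 2 + x⁻¹ / 48 + (x ^ 3)⁻¹ / 320 := by field_simp; ring

theorem scaledArcsin_lt_add_one {x : ℝ} (hx : 1 ≤ x) :
    scaledArcsin x < scaledArcsin (x + 1) := by
  obtain ⟨-, hupper⟩ := scaledArcsin_bounds hx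
  obtain ⟨hlower, -⟩ := scaledArcsin_bounds (by linarith : 1 ≤ x + 1)
  have := inv_le_one_of_one_le₀ hx
  have := inv_le_one_of_one_le₀ (one_le_pow₀ (n := 3) hx)
  have : 0 < (x + 1)⁻¹ / 48 := by positivity
  linarith

theorem inv_add_inv_le_two_thirds_add_inv {x y : ℝ} (hx : 2 ≤ x) (hy : 2 ≤ y) :
    x⁻¹ + y⁻¹ ≤ 2 / 3 + (x + y - 1)⁻¹ := by
  simp only [← one_div]
  rw [div_add_div _ _ (by positivity) (by positivity), div_add_div _ _ (by norm_num) (by linarith),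
    div_le_div_iff₀ (by positivity) (by nlinarith)]
  have hxy := mul_nonneg (sub_nonneg.2 hx) (sub_nonneg.2 hy)
  nlinarith [mul_nonneg hxy (by linarith : (0 : ℝ) ≤ x + y)]

theorem scaledArcsin_add_lt {x y : ℝ} (hx : 2 ≤ x) (hy : 2 ≤ y) :
    scaledArcsin x + scaledArcsin y < scaledArcsin (x + y - 1) + scaledArcsin 1 := by
  obtain ⟨-, hx_le⟩ := scaledArcsin_bounds (by linarith : 1 ≤ x)
  obtain ⟨-, hy_le⟩ := scaledArcsin_bounds (by linarith : 1 ≤ y)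
  obtain ⟨hxy_ge, -⟩ := scaledArcsin_bounds (by linarith : 1 ≤ x + y - 1)
  obtain ⟨h1_ge, -⟩ := scaledArcsin_bounds le_rfl
  have hcube : ∀ t : ℝ, 2 ≤ t → (t ^ 3)⁻¹ ≤ t⁻¹ / 4 := fun t ht => by
    calc (t ^ 3)⁻¹ ≤ (4 * t)⁻¹ :=
          inv_anti₀ (by positivity) (by nlinarith [mul_le_mul ht ht (by norm_num) (by linarith)])
      _ = t⁻¹ / 4 := by ring
  have := inv_add_inv_le_two_thirds_add_inv hx hy
  have := hcube x hx
  have := hcube y hy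
  have : (x + y - 1)⁻¹ ≤ 1 / 3 := by rw [inv_le_comm₀ (by linarith) (by norm_num)]; linarith
  linarith

theorem Lstar_eq (m : ℕ) : Lstar m = m / 3 - 2 / π * scaledArcsin m := by
  rw [Lstar, scaledArcsin, arcsin_one_half]
  field_simp
  ring

noncomputable def averagingGain (m : ℕ) : ℝ := m / 3 - Lstar (m + 1)

theorem averagingGain_eq (m : ℕ) :
    averagingGain m = 2 / π * (scaledArcsin (m + 1) - scaledArcsin 1) := by
  have h1 : scaledArcsin 1 = π / 6 := by simpa [scaledArcsin] using arcsin_one_half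
  rw [averagingGain, Lstar_eq, h1]
  push_cast
  field_simp
  ring

theorem averagingGain_zero : averagingGain 0 = 0 := by
  simp [averagingGain_eq]

theorem strictMono_averagingGain : StrictMono averagingGain :=
  strictMono_nat_of_lt_succ fun m => by
    simp only [averagingGain_eq]
    gcongr
    push_cast
    exact scaledArcsin_lt_add_one (le_add_of_nonneg_left m.cast_nonneg)

theorem averagingGain_add_lt {a b : ℕ} (ha : 0 < a) (hb : 0 < b) :
    averagingGain a + averagingGain b < averagingGain (a + b) := by
  simp only [averagingGain_eq, ← mul_add]
  gcongr
  have ha' : (1 : ℝ) ≤ a := by exact_mod_cast ha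
  have hb' : (1 : ℝ) ≤ b := by exact_mod_cast hb
  have := scaledArcsin_add_lt (x := a + 1) (y := b + 1) (by linarith) (by linarith)
  rw [show (a + 1 : ℝ) + (b + 1) - 1 = a + b + 1 by ring] at this
  push_cast
  linarith

/-- The copy-average loss `Σ_i L*(ℓ_i) + (1/3)(k − Σ_i ℓ_i)` of a partition
`ℓ₁, …, ℓ_n ≥ 1` with `Σ ℓ_i ≤ k` is at least `L*(k − n + 1)`, with equality iff
`Σ ℓ_i = k` and all but one of the `ℓ_i` equal `1` (the remaining one being
`k − n + 1`): the optimal copy-average configuration is `(n−1)`-copy-`1`-average. -/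
theorem optimal_copy_average (k n : ℕ) (hn : 1 ≤ n) (hnk : n < k)
    (ℓ : Fin n → ℕ) (hℓ : ∀ i, 1 ≤ ℓ i) (hsum : ∑ i, ℓ i ≤ k) :
    Lstar (k - n + 1) ≤ (∑ i, Lstar (ℓ i)) + (1 / 3) * ((k : ℝ) - ∑ i, (ℓ i : ℝ)) ∧
    ((∑ i, Lstar (ℓ i)) + (1 / 3) * ((k : ℝ) - ∑ i, (ℓ i : ℝ)) = Lstar (k - n + 1) ↔
      (∑ i, ℓ i = k ∧ ∃ i₀, (∀ i, i ≠ i₀ → ℓ i = 1) ∧ ℓ i₀ = k - n + 1)) := by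
  obtain ⟨d, rfl⟩ := Nat.exists_eq_add_of_le hnk.le
  obtain ⟨j, rfl⟩ : ∃ j : Fin n → ℕ, ℓ = fun i => j i + 1 :=
    ⟨fun i => ℓ i - 1, funext fun i => (Nat.sub_add_cancel (hℓ i)).symm⟩
  beta_reduce at hsum ⊢
  have : Nonempty (Fin n) := ⟨⟨0, hn⟩⟩
  have hsum_j : ∑ i, (j i + 1) = ∑ i, j i + n := by simp [Finset.sum_add_distrib]
  have hloss : ∑ i, Lstar (j i + 1) + 1 / 3 * (((n + d : ℕ) : ℝ) - ∑ i, ((j i + 1 : ℕ) : ℝ))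
      = d / 3 - ∑ i, averagingGain (j i) := by
    simp only [averagingGain, Finset.sum_sub_distrib, ← Finset.sum_div, Nat.cast_add,
      Nat.cast_one, Finset.sum_add_distrib, Finset.sum_const, Finset.card_univ, Fintype.card_fin,
      nsmul_eq_mul, mul_one]
    ring
  have hopt : Lstar (n + d - n + 1) = d / 3 - averagingGain d := by
    simp [averagingGain]
  obtain ⟨hle, hiff⟩ := sum_apply_le_of_sum_le averagingGain_zero
    (fun a b => averagingGain_add_lt) strictMono_averagingGain (j := j) (d := d) (by omega)
  rw [hloss, hopt, sub_right_inj, hiff, hsum_j, Nat.add_sub_cancel_left]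
  refine ⟨by linarith, ?_⟩
  simp only [Nat.add_right_cancel_iff, add_comm _ n, Nat.add_left_cancel_iff, add_eq_right]
  constructor
  · rintro ⟨hjd, i₀, hi₀⟩
    exact ⟨hjd, i₀, hi₀, by rw [← hjd, Fintype.sum_eq_single i₀ hi₀]⟩
  · rintro ⟨hjd, i₀, hi₀, -⟩
    exact ⟨hjd, i₀, hi₀⟩
end

section
/- Define L*(m) = (2/π)·(m·arcsin(1/2) − m²·arcsin(1/(2m))) for positive integers m. Then for all integers ℓ₂ > ℓ₁ ≥ 1, one has L*(ℓ₂ + 1) − L*(ℓ₂) < L*(ℓ₁ + 1) − L*(ℓ₁). -/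
/-!
Up to the factor `2/π`, `L*` is the restriction to `ℕ` of
`F(x) = x·arcsin(1/2) − x²·arcsin(1/(2x))`, whose derivative is `arcsin(1/2) − g(x)` with
`g(x) = 2x·arcsin(1/(2x)) − x/√(4x² − 1)`. The Taylor bound `arcsin u > u + u³/6` at
`u = 1/(2x)` makes `g' > 0` on `[1, ∞)`, so `F'` is strictly decreasing there, and the mean value
theorem on `[ℓ, ℓ + 1]` turns this into strictly decreasing increments `F(ℓ + 1) − F(ℓ)`.
-/

open Real

open Set

lemma increment_lt_of_strictAntiOn_deriv {f f' : ℝ → ℝ} {a x y h : ℝ}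
    (hf : ∀ t ∈ Ici a, HasDerivAt f (f' t) t) (hf' : StrictAntiOn f' (Ici a))
    (hh : 0 < h) (hx : a ≤ x) (hxy : x + h ≤ y) :
    f (y + h) - f y < f (x + h) - f x := by
  have hmvt : ∀ z, a ≤ z → ∃ c ∈ Ioo z (z + h), f (z + h) - f z = h * f' c := fun z hz ↦ by
    obtain ⟨c, hc, hslope⟩ := exists_hasDerivAt_eq_slope f f' (by linarith : z < z + h)
      (fun t ht ↦ (hf t (hz.trans ht.1)).continuousAt.continuousWithinAt)
      (fun t ht ↦ hf t (hz.trans ht.1.le))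
    refine ⟨c, hc, ?_⟩
    rw [hslope, add_sub_cancel_left, mul_div_cancel₀ _ hh.ne']
  obtain ⟨c₁, hc₁, hx⟩ := hmvt x hx
  obtain ⟨c₂, hc₂, hy⟩ := hmvt y (by linarith)
  rw [hx, hy]
  exact mul_lt_mul_of_pos_left (hf' (by simp only [mem_Ici]; linarith [hc₁.1])
    (by simp only [mem_Ici]; linarith [hc₂.1]) (by linarith [hc₁.2, hc₂.1])) hh

lemma add_cube_div_six_lt_arcsin {u : ℝ} (hu₀ : 0 < u) (hu₁ : u ≤ 1) :
    u + u ^ 3 / 6 < arcsin u := by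
  have hmono : StrictMonoOn (fun x ↦ arcsin x - (x + x ^ 3 / 6)) (Icc 0 u) := by
    refine strictMonoOn_of_deriv_pos (convex_Icc 0 u)
      (continuous_arcsin.sub (by fun_prop)).continuousOn fun x hx ↦ ?_
    rw [interior_Icc] at hx
    obtain ⟨hx₀, hxu⟩ := hx
    have hderiv : HasDerivAt (fun x ↦ arcsin x - (x + x ^ 3 / 6))
        (1 / √(1 - x ^ 2) - (1 + x ^ 2 / 2)) x := by
      refine (hasDerivAt_arcsin (by linarith) (by linarith)).sub ?_
      exact ((hasDerivAt_id' x).add ((hasDerivAt_pow 3 x).div_const 6)).congr_deriv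
        (by norm_num; ring)
    rw [hderiv.deriv, sub_pos, lt_div_iff₀ (sqrt_pos.2 (by nlinarith))]
    -- `√(1 - x²) (1 + x²/2) < 1` after squaring: `(1 - x²)(1 + x²/2)² = 1 - 3x⁴/4 - x⁶/4`
    have hsq := sq_sqrt (show 0 ≤ 1 - x ^ 2 by nlinarith)
    nlinarith [sqrt_nonneg (1 - x ^ 2), sq_nonneg (√(1 - x ^ 2) * (1 + x ^ 2 / 2) - 1),
      pow_pos hx₀ 4, pow_pos hx₀ 6]
  simpa using hmono (left_mem_Icc.2 hu₀.le) (right_mem_Icc.2 hu₀.le) hu₀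

lemma hasDerivAt_arcsin_one_div_two_mul {x : ℝ} (hx : 1 / 2 < x) :
    HasDerivAt (fun x ↦ arcsin (1 / (2 * x))) (-(1 / (x * √(4 * x ^ 2 - 1)))) x := by
  have hx₀ : 0 < x := by linarith
  have hpos : 0 < 4 * x ^ 2 - 1 := by nlinarith
  have hinv : HasDerivAt (fun x ↦ 1 / (2 * x)) (-(2 / (2 * x) ^ 2)) x := by
    have hlin : HasDerivAt (fun x : ℝ ↦ 2 * x) 2 x := by simpa using (hasDerivAt_id x).const_mul 2
    simpa [one_div, neg_div, Pi.inv_def] using hlin.inv (by positivity)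
  have hu : 1 / (2 * x) < 1 := by rw [div_lt_one (by positivity)]; linarith
  refine ((hasDerivAt_arcsin (by linarith [show 0 < 1 / (2 * x) by positivity]) hu.ne).comp
    x hinv).congr_deriv ?_
  have hsqrt : √(1 - (1 / (2 * x)) ^ 2) = √(4 * x ^ 2 - 1) / (2 * x) := by
    rw [sqrt_eq_iff_mul_self_eq_of_pos (by positivity), div_mul_div_comm,
      mul_self_sqrt hpos.le]
    field_simp
    ring
  rw [hsqrt]
  field_simp

lemma two_div_sub_one_div_pow_three_lt {x : ℝ} (hx : 1 ≤ x) :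
    2 / √(4 * x ^ 2 - 1) - 1 / √(4 * x ^ 2 - 1) ^ 3 < 1 / x + 1 / (24 * x ^ 3) := by
  have hx₀ : 0 < x := by linarith
  have hpos : 0 < 4 * x ^ 2 - 1 := by nlinarith
  have hs : 0 < √(4 * x ^ 2 - 1) := sqrt_pos.2 hpos
  have hs2 := sq_sqrt hpos.le
  generalize √(4 * x ^ 2 - 1) = s at hs hs2 ⊢
  have key : 24 * x ^ 3 * (8 * x ^ 2 - 3) < (24 * x ^ 2 + 1) * s ^ 3 := by
    -- after squaring, with `y = x²` the gap is `3072y⁴ - 512y³ - 48y² - 36y - 1 > 0`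
    refine lt_of_pow_lt_pow_left₀ 2 (by positivity) ?_
    rw [show ((24 * x ^ 2 + 1) * s ^ 3) ^ 2 = (24 * x ^ 2 + 1) ^ 2 * (s ^ 2) ^ 3 by ring, hs2]
    have hy : 1 ≤ x ^ 2 := by nlinarith
    nlinarith [pow_le_pow_left₀ zero_le_one hy 2, pow_le_pow_left₀ zero_le_one hy 3]
  have hlhs : 2 / s - 1 / s ^ 3 = (8 * x ^ 2 - 3) / s ^ 3 := by
    field_simp
    linear_combination 2 * hs2
  have hrhs : 1 / x + 1 / (24 * x ^ 3) = (24 * x ^ 2 + 1) / (24 * x ^ 3) := by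
    field_simp
  rw [hlhs, hrhs, div_lt_div_iff₀ (by positivity) (by positivity)]
  linarith

noncomputable def lstarReal (x : ℝ) : ℝ :=
  x * arcsin (1 / 2) - x ^ 2 * arcsin (1 / (2 * x))

noncomputable def lstarDeficit (x : ℝ) : ℝ :=
  2 * x * arcsin (1 / (2 * x)) - x / √(4 * x ^ 2 - 1)

lemma Lstar_eq_lstarReal (m : ℕ) : Lstar m = 2 / π * lstarReal m := rfl

lemma hasDerivAt_lstarReal {x : ℝ} (hx : 1 / 2 < x) :
    HasDerivAt lstarReal (arcsin (1 / 2) - lstarDeficit x) x := by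
  refine (((hasDerivAt_id x).mul_const _).sub ((hasDerivAt_pow 2 x).mul
    (hasDerivAt_arcsin_one_div_two_mul hx))).congr_deriv ?_
  have hs : 0 < √(4 * x ^ 2 - 1) := sqrt_pos.2 (by nlinarith)
  simp only [lstarDeficit]
  generalize √(4 * x ^ 2 - 1) = s at hs ⊢
  field_simp
  ring

lemma hasDerivAt_lstarDeficit {x : ℝ} (hx : 1 / 2 < x) :
    HasDerivAt lstarDeficit
      (2 * arcsin (1 / (2 * x)) - 2 / √(4 * x ^ 2 - 1) + 1 / √(4 * x ^ 2 - 1) ^ 3) x := by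
  have hpos : 0 < 4 * x ^ 2 - 1 := by nlinarith
  have hs : 0 < √(4 * x ^ 2 - 1) := sqrt_pos.2 hpos
  have hs2 := sq_sqrt hpos.le
  have hq : HasDerivAt (fun x ↦ 4 * x ^ 2 - 1) (8 * x) x :=
    (((hasDerivAt_pow 2 x).const_mul 4).sub_const 1).congr_deriv (by norm_num; ring)
  refine ((((hasDerivAt_id x).const_mul 2).mul (hasDerivAt_arcsin_one_div_two_mul hx)).sub
    ((hasDerivAt_id x).div (hq.sqrt hpos.ne') hs.ne')).congr_deriv ?_
  simp only [id]
  generalize √(4 * x ^ 2 - 1) = s at hs hs2 ⊢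
  field_simp
  linear_combination (-2) * hs2

lemma strictMonoOn_lstarDeficit : StrictMonoOn lstarDeficit (Ici 1) := by
  refine strictMonoOn_of_deriv_pos (convex_Ici 1) (fun x hx ↦
    (hasDerivAt_lstarDeficit (by linarith [mem_Ici.1 hx])).continuousAt.continuousWithinAt)
    fun x hx ↦ ?_
  rw [interior_Ici] at hx
  have hx₁ : 1 < x := hx
  rw [(hasDerivAt_lstarDeficit (by linarith)).deriv]
  have harcsin := add_cube_div_six_lt_arcsin (u := 1 / (2 * x)) (by positivity)
    (by rw [div_le_one (by positivity)]; linarith)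
  have hcube : 2 * (1 / (2 * x) + (1 / (2 * x)) ^ 3 / 6) = 1 / x + 1 / (24 * x ^ 3) := by
    field_simp
    ring
  linarith [two_div_sub_one_div_pow_three_lt hx₁.le]

/-- The marginal cost of one more teacher neuron is strictly smaller for a student
neuron that already averages more teacher neurons. -/
theorem Lstar_strict_concavity (ℓ₁ ℓ₂ : ℕ) (h₁ : 1 ≤ ℓ₁) (h₁₂ : ℓ₁ < ℓ₂) :
    Lstar (ℓ₂ + 1) - Lstar ℓ₂ < Lstar (ℓ₁ + 1) - Lstar ℓ₁ := by
  have hanti : StrictAntiOn (fun x ↦ arcsin (1 / 2) - lstarDeficit x) (Ici 1) :=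
    fun _ hs _ ht hst ↦ sub_lt_sub_left (strictMonoOn_lstarDeficit hs ht hst) _
  have key := increment_lt_of_strictAntiOn_deriv
    (fun t ht ↦ hasDerivAt_lstarReal (by linarith [mem_Ici.1 ht])) hanti one_pos
    (by exact_mod_cast h₁ : (1 : ℝ) ≤ ℓ₁) (by exact_mod_cast h₁₂ : (ℓ₁ : ℝ) + 1 ≤ ℓ₂)
  simp only [Lstar_eq_lstarReal, Nat.cast_add, Nat.cast_one, ← mul_sub]
  exact mul_lt_mul_of_pos_left key (by positivity)
end

section
/- Define L*(m) = (2/π)·(m·arcsin(1/2) − m²·arcsin(1/(2m))) for positive integers m. Then for all integers ℓ₁ ≥ 1 and ℓ₀ ≥ 1, one has L*(ℓ₁) + ℓ₀·(2/π)·arcsin(1/2) > L*(ℓ₁ + ℓ₀). -/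
open Real

/-! The claim reduces to `g ℓ₁ < g (ℓ₁ + ℓ₀)` for `g x = x² arcsin(1/(2x))`, and the two
bounds `t ≤ arcsin t ≤ tan (arcsin t) = t / √(1 - t²)` squeeze `g` between `x / 2` and
`(x + 1) / 2` on `[1, ∞)`. -/

namespace Real

lemma self_le_arcsin {t : ℝ} (h0 : 0 ≤ t) (h1 : t ≤ 1) : t ≤ arcsin t :=
  (le_arcsin_iff_sin_le' ⟨by linarith [pi_pos], by linarith [pi_gt_three]⟩).2 (sin_le h0)

lemma arcsin_le_div_sqrt {t : ℝ} (h0 : 0 ≤ t) (h1 : t < 1) : arcsin t ≤ t / √(1 - t ^ 2) :=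
  tan_arcsin t ▸ le_tan (arcsin_nonneg.2 h0) (arcsin_lt_pi_div_two.2 h1)

end Real

lemma half_le_sq_mul_arcsin_inv {x : ℝ} (hx : 1 / 2 ≤ x) :
    x / 2 ≤ x ^ 2 * arcsin (1 / (2 * x)) := by
  have hx0 : 0 < x := by linarith
  calc x / 2 = x ^ 2 * (1 / (2 * x)) := by field_simp
    _ ≤ x ^ 2 * arcsin (1 / (2 * x)) := by
      gcongr
      exact self_le_arcsin (by positivity) (by rw [div_le_one (by positivity)]; linarith)

lemma sq_mul_arcsin_inv_lt {x : ℝ} (hx : 1 ≤ x) :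
    x ^ 2 * arcsin (1 / (2 * x)) < (x + 1) / 2 := by
  have hx0 : 0 < x := by linarith
  set t := 1 / (2 * x) with ht
  have ht1 : t < 1 := by rw [ht, div_lt_one (by positivity)]; linarith
  have hs : x / (x + 1) < √(1 - t ^ 2) := by
    rw [lt_sqrt (by positivity), div_pow, div_lt_iff₀ (by positivity), ht]
    field_simp
    nlinarith
  calc x ^ 2 * arcsin t ≤ x ^ 2 * (t / √(1 - t ^ 2)) := by
        gcongr; exact arcsin_le_div_sqrt (by positivity) ht1
    _ = x / 2 / √(1 - t ^ 2) := by rw [ht]; field_simp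
    _ < (x + 1) / 2 := by
      have hs0 : 0 < √(1 - t ^ 2) := lt_trans (by positivity) hs
      rw [div_lt_iff₀ hs0]
      rw [div_lt_iff₀ (by positivity)] at hs
      linarith

/-- It is better to average `ℓ₁ + ℓ₀` teacher neurons with one student neuron than to
average `ℓ₁` of them and ignore the remaining `ℓ₀` (error of the zero predictor). -/
theorem Lstar_use_all_teachers (ℓ₁ ℓ₀ : ℕ) (h₁ : 1 ≤ ℓ₁) (h₀ : 1 ≤ ℓ₀) :
    Lstar (ℓ₁ + ℓ₀) < Lstar ℓ₁ + (ℓ₀ : ℝ) * ((2 / π) * Real.arcsin (1 / 2)) := by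
  have hℓ₁ : (1 : ℝ) ≤ ℓ₁ := by exact_mod_cast h₁
  have hℓ₀ : (1 : ℝ) ≤ ℓ₀ := by exact_mod_cast h₀
  have hmono : (ℓ₁ : ℝ) ^ 2 * arcsin (1 / (2 * ℓ₁)) <
      ((ℓ₁ + ℓ₀ : ℕ) : ℝ) ^ 2 * arcsin (1 / (2 * ((ℓ₁ + ℓ₀ : ℕ) : ℝ))) := by
    calc (ℓ₁ : ℝ) ^ 2 * arcsin (1 / (2 * ℓ₁)) < (ℓ₁ + 1) / 2 := sq_mul_arcsin_inv_lt hℓ₁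
      _ ≤ ((ℓ₁ + ℓ₀ : ℕ) : ℝ) / 2 := by push_cast; linarith
      _ ≤ _ := half_le_sq_mul_arcsin_inv (by push_cast; linarith)
  have hgap : Lstar ℓ₁ + (ℓ₀ : ℝ) * ((2 / π) * arcsin (1 / 2)) - Lstar (ℓ₁ + ℓ₀) =
      (2 / π) * (((ℓ₁ + ℓ₀ : ℕ) : ℝ) ^ 2 * arcsin (1 / (2 * ((ℓ₁ + ℓ₀ : ℕ) : ℝ)))
        - (ℓ₁ : ℝ) ^ 2 * arcsin (1 / (2 * ℓ₁))) := by
    unfold Lstar; push_cast; ring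
  have := mul_pos (by positivity : (0 : ℝ) < 2 / π) (sub_pos.2 hmono)
  linarith
end

section
/- For every β with 0 < β ≤ 2 and every x ∈ ℝ, e^{2βx} + e^{βx}·(2 − βx − β²) + 1 − βx + β² > 0. Equivalently, the softplus activation σ_β(x) = (1/β)·log(e^{βx} + 1) satisfies σ_β'(x) − x·σ_β''(x) + σ_β'''(x) > 0 for all x ∈ ℝ. -/
open Real

/-- The softplus activation `σ_β(x) = (1/β) log(e^{βx} + 1)`. -/
noncomputable def softplus (β x : ℝ) : ℝ := (1 / β) * Real.log (Real.exp (β * x) + 1)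

/-!
The derivatives of `σ_β` are polynomials in `s = sigmoid (β x)`: `σ_β' = s`,
`σ_β'' = β s (1 - s)`, `σ_β''' = β² s (1 - s) (1 - 2s)`. Writing `t = β x` and `u = e^t`, the
combination `σ_β' - x σ_β'' + σ_β'''` is `u P / (u + 1)³`, where
`P = (u + 1)(u + 1 - t) - β² (u - 1)` is the left-hand side of the first inequality.
For `t ≤ 0` both terms of `P` are nonnegative and the first is positive, since `u > 0 ≥ t`.
For `t ≥ 0` the worst case is `β² = 4`, and the bound `t ≤ sinh t`, i.e. `2 t u ≤ u² - 1`,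
gives `2 u P ≥ u³ - 5u² + 11u + 1 > 0`.
-/

lemma sigmoid_eq_exp_div (t : ℝ) : sigmoid t = exp t / (exp t + 1) := by
  rw [sigmoid_def, exp_neg]
  field_simp

lemma hasDerivAt_softplus {β : ℝ} (hβ : β ≠ 0) (x : ℝ) :
    HasDerivAt (softplus β) (sigmoid (β * x)) x := by
  have hinner : HasDerivAt (fun x => exp (β * x) + 1) (exp (β * x) * β) x :=
    ((hasDerivAt_id x).const_mul β).exp.add_const 1 |>.congr_deriv (by simp)
  refine (hinner.log (by positivity)).const_mul (1 / β) |>.congr_deriv ?_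
  rw [sigmoid_eq_exp_div]
  field_simp

lemma hasDerivAt_sigmoid_comp_mul (β x : ℝ) :
    HasDerivAt (fun x => sigmoid (β * x)) (β * (sigmoid (β * x) * (1 - sigmoid (β * x)))) x := by
  refine (hasDerivAt_sigmoid (β * x)).comp x ((hasDerivAt_id x).const_mul β) |>.congr_deriv ?_
  simp only [mul_one]
  ring

lemma deriv_softplus {β : ℝ} (hβ : β ≠ 0) :
    deriv (softplus β) = fun x => sigmoid (β * x) :=
  funext fun x => (hasDerivAt_softplus hβ x).deriv

lemma deriv_deriv_softplus {β : ℝ} (hβ : β ≠ 0) :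
    deriv (deriv (softplus β)) = fun x => β * (sigmoid (β * x) * (1 - sigmoid (β * x))) := by
  rw [deriv_softplus hβ]
  exact funext fun x => (hasDerivAt_sigmoid_comp_mul β x).deriv

lemma deriv_deriv_deriv_softplus {β : ℝ} (hβ : β ≠ 0) :
    deriv (deriv (deriv (softplus β))) = fun x =>
      β ^ 2 * (sigmoid (β * x) * (1 - sigmoid (β * x)) * (1 - 2 * sigmoid (β * x))) := by
  rw [deriv_deriv_softplus hβ]
  funext x
  have hs := hasDerivAt_sigmoid_comp_mul β x
  refine ((hs.mul (hs.const_sub 1)).const_mul β).congr_deriv ?_ |>.deriv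
  ring

lemma deriv_sub_mul_deriv_deriv_add_deriv_deriv_deriv_softplus {β : ℝ} (hβ : β ≠ 0) (x : ℝ) :
    deriv (softplus β) x - x * deriv (deriv (softplus β)) x +
        deriv (deriv (deriv (softplus β))) x =
      exp (β * x) * ((exp (β * x) + 1) * (exp (β * x) + 1 - β * x) - β ^ 2 * (exp (β * x) - 1)) /
        (exp (β * x) + 1) ^ 3 := by
  rw [deriv_deriv_deriv_softplus hβ, deriv_deriv_softplus hβ, deriv_softplus hβ]
  dsimp only
  rw [sigmoid_eq_exp_div]
  field_simp
  ring

lemma two_mul_mul_exp_le_exp_sq_sub_one {t : ℝ} (ht : 0 ≤ t) :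
    2 * t * exp t ≤ exp t ^ 2 - 1 := by
  have h := self_le_sinh_iff.mpr ht
  rw [sinh_eq, exp_neg, le_div_iff₀ two_pos] at h
  have hu := exp_pos t
  calc 2 * t * exp t = exp t * (t * 2) := by ring
    _ ≤ exp t * (exp t - (exp t)⁻¹) := by gcongr
    _ = exp t ^ 2 - 1 := by field_simp

lemma exp_add_one_mul_sub_sub_mul_pos {t b : ℝ} (hb0 : 0 ≤ b) (hb4 : b ≤ 4) :
    0 < (exp t + 1) * (exp t + 1 - t) - b * (exp t - 1) := by
  have hu0 : 0 < exp t := exp_pos t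
  rcases le_total t 0 with ht | ht
  · have hu1 : exp t ≤ 1 := exp_le_one_iff.mpr ht
    nlinarith [mul_nonneg hb0 (sub_nonneg.mpr hu1)]
  · have hu1 : 1 ≤ exp t := one_le_exp_iff.mpr ht
    nlinarith [mul_nonneg (sub_nonneg.mpr hb4) (sub_nonneg.mpr hu1),
      mul_le_mul_of_nonneg_left (two_mul_mul_exp_le_exp_sq_sub_one ht)
        (by linarith : (0 : ℝ) ≤ exp t + 1),
      sq_nonneg (exp t - 5 / 2)]

/-- For `0 < β ≤ 2`, `e^{2βx} + e^{βx}(2 − βx − β²) + 1 − βx + β² > 0` for all `x`;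
equivalently, the softplus activation satisfies `σ_β' − xσ_β'' + σ_β''' > 0`
everywhere. -/
theorem softplus_activation_property (β : ℝ) (hβ : 0 < β) (hβ2 : β ≤ 2) :
    (∀ x : ℝ,
      0 < Real.exp (2 * β * x) + Real.exp (β * x) * (2 - β * x - β ^ 2) +
        1 - β * x + β ^ 2) ∧
    (∀ x : ℝ,
      0 < deriv (softplus β) x - x * deriv (deriv (softplus β)) x +
        deriv (deriv (deriv (softplus β))) x) := by
  have hP (t : ℝ) : 0 < (exp t + 1) * (exp t + 1 - t) - β ^ 2 * (exp t - 1) :=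
    exp_add_one_mul_sub_sub_mul_pos (sq_nonneg β) (by nlinarith)
  refine ⟨fun x => ?_, fun x => ?_⟩
  · rw [show 2 * β * x = β * x + β * x by ring, exp_add]
    linear_combination hP (β * x)
  · rw [deriv_sub_mul_deriv_deriv_add_deriv_deriv_deriv_softplus hβ.ne']
    exact div_pos (mul_pos (exp_pos _) (hP _)) (by positivity)
end
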